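/- Let d₀, d₁ ≥ 1, let U_0, …, U_{d₀-1} and V_0, …, V_{d₁-1} be unitary 2×2 complex matrices, let H_{d₀} and H_{d₁} be the Fourier matrices of sizes d₀ and d₁, and define the unitaries U = Σ_{i<d₀} U_i ⊗ (H_{d₀}|i⟩⟨i|H_{d₀}†) ⊗ I_{d₁} and V = Σ_{j<d₁} V_j ⊗ I_{d₀} ⊗ (H_{d₁}|j⟩⟨j|H_{d₁}†) on ℂ²⊗ℂ^{d₀}⊗ℂ^{d₁}, and set W = U V. Then for every linear map E on M₂(ℂ) and every ρ ∈ M₂(ℂ), tr_{2,3}[ W† · ((E ⊗ id ⊗ id)( W (ρ ⊗ |0⟩⟨0| ⊗ |0⟩⟨0|) W† )) · W ] = (1/(d₀ d₁)) Σ_{i<d₀} Σ_{j<d₁} V_j† U_i† · E( U_i V_j ρ V_j† U_i† ) · U_i V_j; that is, the supermap built from W realizes the composition of the twirl by {V_j} followed by the twirl by {U_i}. -/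

import Mathlib

open Matrix
open scoped Kronecker BigOperators

/-- The `d × d` Fourier matrix, with entries `e^{2πi jk/d}/√d`. -/
noncomputable def fourierMat (d : ℕ) : Matrix (Fin d) (Fin d) ℂ :=
  Matrix.of fun j k : Fin d =>
    Complex.exp (2 * Real.pi * Complex.I * (j : ℕ) * (k : ℕ) / d) / (Real.sqrt d : ℂ)

/-- The action of `E ⊗ id ⊗ id` on `M₂(ℂ) ⊗ M_{d₀}(ℂ) ⊗ M_{d₁}(ℂ)`, acting as `E`
on the first tensor factor and as the identity on the other two. -/
noncomputable def tensorMap3 (d₀ d₁ : ℕ)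
    (E : Matrix (Fin 2) (Fin 2) ℂ →ₗ[ℂ] Matrix (Fin 2) (Fin 2) ℂ)
    (M : Matrix ((Fin 2 × Fin d₀) × Fin d₁) ((Fin 2 × Fin d₀) × Fin d₁) ℂ) :
    Matrix ((Fin 2 × Fin d₀) × Fin d₁) ((Fin 2 × Fin d₀) × Fin d₁) ℂ :=
  Matrix.of fun p q =>
    E (Matrix.of fun a b => M ((a, p.1.2), p.2) ((b, q.1.2), q.2)) p.1.1 q.1.1

/-- Partial trace over the second and third tensor factors. -/
noncomputable def ptrace23 (d₀ d₁ : ℕ)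
    (M : Matrix ((Fin 2 × Fin d₀) × Fin d₁) ((Fin 2 × Fin d₀) × Fin d₁) ℂ) :
    Matrix (Fin 2) (Fin 2) ℂ :=
  Matrix.of fun a b => ∑ m : Fin d₀, ∑ n : Fin d₁, M ((a, m), n) ((b, m), n)

/-
Since the Fourier matrix is unitary, the projectors `P i = H |i⟩⟨i| H†` are Hermitian and pairwise
orthogonal, and `W = U V = ∑ i j, (U' i * V' j) ⊗ P i ⊗ Q j` is controlled by the two Fourier
registers. Expanding `W† (E ⊗ id ⊗ id)(W (ρ ⊗ σ ⊗ τ) W†) W` into Kronecker products, the partial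
trace of each term carries the factor `tr (P k P i σ P i' P k') * tr (Q l Q j τ Q j' Q l')`, which
vanishes unless both index quadruples collapse to single indices `i`, `j`. What survives is
`∑ i j, tr (P i σ) tr (Q j τ) • (U' i V' j)† E (U' i V' j ρ (U' i V' j)†) (U' i V' j)`, and for
`σ = |0⟩⟨0|` the weight `tr (P i σ) = |H₀ᵢ|² = 1 / d₀` is uniform.
-/

section OrthogonalProjections

variable {n R : Type*} [Fintype n] [DecidableEq n]

theorem mul_single_one_mul_apply [NonAssocSemiring R] (F G : Matrix n n R) (i j a b : n) :
    (F * single i j (1 : R) * G) a b = F a i * G j b := by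
  simp [mul_apply, single, ite_and]

theorem conjTranspose_mul_single_one_mul_conjTranspose [Semiring R] [StarRing R]
    (F : Matrix n n R) (i : n) : (F * single i i 1 * Fᴴ)ᴴ = F * single i i 1 * Fᴴ := by
  rw [conjTranspose_mul, conjTranspose_mul, conjTranspose_conjTranspose, conjTranspose_single,
    star_one, Matrix.mul_assoc]

theorem mul_single_one_mul_conjTranspose_orthogonal [Semiring R] [StarRing R]
    {F : Matrix n n R} (hF : Fᴴ * F = 1) (i i' : n) :
    (F * single i i 1 * Fᴴ) * (F * single i' i' 1 * Fᴴ) =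
      if i = i' then F * single i i 1 * Fᴴ else 0 := by
  have : (F * single i i 1 * Fᴴ) * (F * single i' i' 1 * Fᴴ) =
      F * (single i i 1 * single i' i' 1) * Fᴴ := by
    simp only [Matrix.mul_assoc]
    rw [← Matrix.mul_assoc Fᴴ, hF, Matrix.one_mul]
  split_ifs with h
  · rw [this, h, single_mul_single_same, mul_one]
  · rw [this, single_mul_single_of_ne (h := h), Matrix.mul_zero, Matrix.zero_mul]

theorem trace_mul_mul_mul_mul_of_orthogonal [CommSemiring R] {ι : Type*} [DecidableEq ι]
    {P : ι → Matrix n n R} (hP : ∀ i i', P i * P i' = if i = i' then P i else 0)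
    (σ : Matrix n n R) (k i i' k' : ι) :
    trace (P k * (P i * (σ * (P i' * P k')))) =
      -- nested so that the sums over `k`, `k'`, `i'` collapse by `Finset.sum_ite_eq`
      if k = i then if i' = k' then if i' = i then trace (P i * σ) else 0 else 0 else 0 := by
  rw [← Matrix.mul_assoc (P k), hP]
  by_cases hki : k = i
  · subst hki
    rw [if_pos rfl, if_pos rfl, hP]
    by_cases hi'k' : i' = k'
    · subst hi'k'
      rw [if_pos rfl, if_pos rfl, ← Matrix.mul_assoc, trace_mul_cycle, hP]
      split_ifs with h
      · rw [h]
      · rw [Matrix.zero_mul, trace_zero]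
    · simp [hi'k']
  · simp [hki]

end OrthogonalProjections

theorem IsPrimitiveRoot.sum_div_pow_pow {K : Type*} [Field K] {ζ : K} {d : ℕ}
    (hζ : IsPrimitiveRoot ζ d) (j k : Fin d) :
    ∑ m : Fin d, (ζ ^ (k : ℕ) / ζ ^ (j : ℕ)) ^ (m : ℕ) = if j = k then (d : K) else 0 := by
  have hζ0 : ζ ≠ 0 := hζ.ne_zero (Fin.pos j).ne'
  rw [Fin.sum_univ_eq_sum_range (fun m => (ζ ^ (k : ℕ) / ζ ^ (j : ℕ)) ^ m)]
  split_ifs with hjk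
  · simp [hjk, hζ0]
  · have hne : ζ ^ (k : ℕ) / ζ ^ (j : ℕ) ≠ 1 := fun h =>
      hjk (Fin.ext (hζ.pow_inj j.isLt k.isLt ((div_eq_one_iff_eq (pow_ne_zero _ hζ0)).mp h).symm))
    have hpow : (ζ ^ (k : ℕ) / ζ ^ (j : ℕ)) ^ d = 1 := by
      rw [div_pow, ← pow_mul, ← pow_mul, pow_mul', pow_mul', hζ.pow_eq_one, one_pow, one_pow, div_one]
    rw [geom_sum_eq hne, hpow, sub_self, zero_div]

theorem fourierMat_apply_eq_pow (d : ℕ) (j k : Fin d) :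
    fourierMat d j k =
      Complex.exp (2 * Real.pi * Complex.I / d) ^ ((j : ℕ) * (k : ℕ)) / (Real.sqrt d : ℂ) := by
  rw [fourierMat, of_apply, ← Complex.exp_nat_mul]
  push_cast
  ring_nf

theorem ofReal_sqrt_natCast_mul_self (d : ℕ) : (Real.sqrt d : ℂ) * Real.sqrt d = d := by
  rw [← Complex.ofReal_mul, Real.mul_self_sqrt d.cast_nonneg, Complex.ofReal_natCast]

theorem fourierMat_conjTranspose_mul_self (d : ℕ) : (fourierMat d)ᴴ * fourierMat d = 1 := by
  rcases d.eq_zero_or_pos with rfl | hd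
  · exact Subsingleton.elim _ _
  have hζ := Complex.isPrimitiveRoot_exp d hd.ne'
  set ζ := Complex.exp (2 * Real.pi * Complex.I / d)
  have hstar : star ζ = ζ⁻¹ := (Complex.inv_eq_conj (hζ.norm'_eq_one hd.ne')).symm
  ext j k
  have hterm : ∀ m : Fin d, star (fourierMat d m j) * fourierMat d m k =
      (ζ ^ (k : ℕ) / ζ ^ (j : ℕ)) ^ (m : ℕ) / d := by
    intro m
    rw [fourierMat_apply_eq_pow, fourierMat_apply_eq_pow, star_div₀, star_pow, hstar,
      Complex.star_def, Complex.conj_ofReal, div_mul_div_comm, ofReal_sqrt_natCast_mul_self,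
      inv_pow, div_pow, ← pow_mul, ← pow_mul]
    ring
  simp only [mul_apply, conjTranspose_apply, hterm, ← Finset.sum_div, hζ.sum_div_pow_pow, one_apply]
  split_ifs <;> simp [hd.ne']

theorem fourierMat_zero_apply (d : ℕ) (hd : 0 < d) (k : Fin d) :
    fourierMat d ⟨0, hd⟩ k = 1 / (Real.sqrt d : ℂ) := by
  simp [fourierMat]

theorem fourierMat_mul_single_mul_conjTranspose_apply_zero (d : ℕ) (hd : 0 < d) (i : Fin d) :
    (fourierMat d * single i i (1 : ℂ) * (fourierMat d)ᴴ) ⟨0, hd⟩ ⟨0, hd⟩ = 1 / d := by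
  rw [mul_single_one_mul_apply, conjTranspose_apply, fourierMat_zero_apply, star_div₀, star_one,
    Complex.star_def, Complex.conj_ofReal, div_mul_div_comm, one_mul,
    ofReal_sqrt_natCast_mul_self]

section PartialTrace

noncomputable def tensorMap3LinearMap (d₀ d₁ : ℕ)
    (E : Matrix (Fin 2) (Fin 2) ℂ →ₗ[ℂ] Matrix (Fin 2) (Fin 2) ℂ) :
    Matrix ((Fin 2 × Fin d₀) × Fin d₁) ((Fin 2 × Fin d₀) × Fin d₁) ℂ →ₗ[ℂ]
      Matrix ((Fin 2 × Fin d₀) × Fin d₁) ((Fin 2 × Fin d₀) × Fin d₁) ℂ where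
  toFun := tensorMap3 d₀ d₁ E
  map_add' M N := by
    ext p q
    simp only [tensorMap3, of_apply, Matrix.add_apply]
    rw [← Matrix.add_apply, ← map_add]
    rfl
  map_smul' c M := by
    ext p q
    simp only [tensorMap3, of_apply, Matrix.smul_apply, smul_eq_mul, RingHom.id_apply]
    rw [← smul_eq_mul c, ← Matrix.smul_apply, ← map_smul]
    rfl

noncomputable def ptrace23LinearMap (d₀ d₁ : ℕ) :
    Matrix ((Fin 2 × Fin d₀) × Fin d₁) ((Fin 2 × Fin d₀) × Fin d₁) ℂ →ₗ[ℂ]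
      Matrix (Fin 2) (Fin 2) ℂ where
  toFun := ptrace23 d₀ d₁
  map_add' M N := by
    ext a b
    simp [ptrace23, Finset.sum_add_distrib]
  map_smul' c M := by
    ext a b
    simp [ptrace23, Finset.mul_sum]

variable {d₀ d₁ : ℕ}

theorem tensorMap3_kronecker (E : Matrix (Fin 2) (Fin 2) ℂ →ₗ[ℂ] Matrix (Fin 2) (Fin 2) ℂ)
    (A : Matrix (Fin 2) (Fin 2) ℂ) (B : Matrix (Fin d₀) (Fin d₀) ℂ)
    (C : Matrix (Fin d₁) (Fin d₁) ℂ) :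
    tensorMap3 d₀ d₁ E (A ⊗ₖ B ⊗ₖ C) = E A ⊗ₖ B ⊗ₖ C := by
  ext ⟨⟨a, m⟩, n⟩ ⟨⟨b, m'⟩, n'⟩
  have : (of fun a b => A a b * B m m' * C n n') = (B m m' * C n n') • A := by
    ext x y
    simp only [of_apply, Matrix.smul_apply, smul_eq_mul]
    ring
  simp only [tensorMap3, of_apply, kroneckerMap_apply, this, map_smul, Matrix.smul_apply, smul_eq_mul]
  ring

theorem ptrace23_kronecker (A : Matrix (Fin 2) (Fin 2) ℂ) (B : Matrix (Fin d₀) (Fin d₀) ℂ)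
    (C : Matrix (Fin d₁) (Fin d₁) ℂ) :
    ptrace23 d₀ d₁ (A ⊗ₖ B ⊗ₖ C) = (trace B * trace C) • A := by
  ext a b
  simp only [ptrace23, of_apply, kroneckerMap_apply, Matrix.smul_apply, smul_eq_mul, trace, diag,
    Finset.sum_mul, Finset.mul_sum]
  rw [Finset.sum_comm]
  exact Finset.sum_congr rfl fun n _ => Finset.sum_congr rfl fun m _ => by ring

theorem tensorMap3_sum (E : Matrix (Fin 2) (Fin 2) ℂ →ₗ[ℂ] Matrix (Fin 2) (Fin 2) ℂ)
    {ι : Type*} (s : Finset ι)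
    (f : ι → Matrix ((Fin 2 × Fin d₀) × Fin d₁) ((Fin 2 × Fin d₀) × Fin d₁) ℂ) :
    tensorMap3 d₀ d₁ E (∑ x ∈ s, f x) = ∑ x ∈ s, tensorMap3 d₀ d₁ E (f x) :=
  map_sum (tensorMap3LinearMap d₀ d₁ E) f s

theorem ptrace23_sum {ι : Type*} (s : Finset ι)
    (f : ι → Matrix ((Fin 2 × Fin d₀) × Fin d₁) ((Fin 2 × Fin d₀) × Fin d₁) ℂ) :
    ptrace23 d₀ d₁ (∑ x ∈ s, f x) = ∑ x ∈ s, ptrace23 d₀ d₁ (f x) :=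
  map_sum (ptrace23LinearMap d₀ d₁) f s

theorem ptrace23_supermap_controlled {ι κ : Type*} [Fintype ι] [Fintype κ]
    [DecidableEq ι] [DecidableEq κ]
    (E : Matrix (Fin 2) (Fin 2) ℂ →ₗ[ℂ] Matrix (Fin 2) (Fin 2) ℂ)
    (A : ι → κ → Matrix (Fin 2) (Fin 2) ℂ)
    {P : ι → Matrix (Fin d₀) (Fin d₀) ℂ} {Q : κ → Matrix (Fin d₁) (Fin d₁) ℂ}
    (hP_herm : ∀ i, (P i)ᴴ = P i) (hQ_herm : ∀ j, (Q j)ᴴ = Q j)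
    (hP : ∀ i i', P i * P i' = if i = i' then P i else 0)
    (hQ : ∀ j j', Q j * Q j' = if j = j' then Q j else 0)
    (ρ : Matrix (Fin 2) (Fin 2) ℂ) (σ : Matrix (Fin d₀) (Fin d₀) ℂ)
    (τ : Matrix (Fin d₁) (Fin d₁) ℂ)
    {W : Matrix ((Fin 2 × Fin d₀) × Fin d₁) ((Fin 2 × Fin d₀) × Fin d₁) ℂ}
    (hW : W = ∑ i, ∑ j, A i j ⊗ₖ P i ⊗ₖ Q j) :
    ptrace23 d₀ d₁ (Wᴴ * tensorMap3 d₀ d₁ E (W * (ρ ⊗ₖ σ ⊗ₖ τ) * Wᴴ) * W) =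
      ∑ i, ∑ j, (trace (P i * σ) * trace (Q j * τ)) •
        ((A i j)ᴴ * E (A i j * ρ * (A i j)ᴴ) * A i j) := by
  have hWH : Wᴴ = ∑ i, ∑ j, (A i j)ᴴ ⊗ₖ P i ⊗ₖ Q j := by
    simp only [hW, conjTranspose_sum, conjTranspose_kronecker, hP_herm, hQ_herm]
  rw [hWH, hW]
  simp only [Finset.sum_mul, Finset.mul_sum, ← mul_kronecker_mul, tensorMap3_sum,
    tensorMap3_kronecker, ptrace23_sum, ptrace23_kronecker, Matrix.mul_assoc,
    trace_mul_mul_mul_mul_of_orthogonal hP, trace_mul_mul_mul_mul_of_orthogonal hQ]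
  simp only [mul_ite, ite_mul, mul_zero, zero_mul, ite_smul, zero_smul,
    Finset.sum_ite_irrel, Finset.sum_const_zero, Finset.sum_ite_eq, Finset.sum_ite_eq',
    Finset.mem_univ, if_true]

end PartialTrace

theorem stmt2_general (d₀ d₁ : ℕ) (hd₀ : 1 ≤ d₀) (hd₁ : 1 ≤ d₁)
    (U' : Fin d₀ → Matrix (Fin 2) (Fin 2) ℂ)
    (V' : Fin d₁ → Matrix (Fin 2) (Fin 2) ℂ)
    (U V W : Matrix ((Fin 2 × Fin d₀) × Fin d₁) ((Fin 2 × Fin d₀) × Fin d₁) ℂ)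
    (hU : U = ∑ i : Fin d₀,
      (U' i) ⊗ₖ (fourierMat d₀ * Matrix.single i i 1 * (fourierMat d₀)ᴴ) ⊗ₖ
        (1 : Matrix (Fin d₁) (Fin d₁) ℂ))
    (hV : V = ∑ j : Fin d₁,
      (V' j) ⊗ₖ (1 : Matrix (Fin d₀) (Fin d₀) ℂ) ⊗ₖ
        (fourierMat d₁ * Matrix.single j j 1 * (fourierMat d₁)ᴴ))
    (hW : W = U * V)
    (E : Matrix (Fin 2) (Fin 2) ℂ →ₗ[ℂ] Matrix (Fin 2) (Fin 2) ℂ)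
    (ρ : Matrix (Fin 2) (Fin 2) ℂ) :
    ptrace23 d₀ d₁
      (Wᴴ * tensorMap3 d₀ d₁ E
        (W * (ρ ⊗ₖ Matrix.single (⟨0, hd₀⟩ : Fin d₀) (⟨0, hd₀⟩ : Fin d₀) 1 ⊗ₖ
                Matrix.single (⟨0, hd₁⟩ : Fin d₁) (⟨0, hd₁⟩ : Fin d₁) 1) * Wᴴ) * W)
      = (1 / ((d₀ : ℂ) * (d₁ : ℂ))) •
          ∑ i : Fin d₀, ∑ j : Fin d₁,
            (V' j)ᴴ * (U' i)ᴴ * E (U' i * V' j * ρ * (V' j)ᴴ * (U' i)ᴴ) *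
              (U' i * V' j) := by
  have hW_controlled : W = ∑ i, ∑ j, (U' i * V' j) ⊗ₖ
      (fourierMat d₀ * single i i 1 * (fourierMat d₀)ᴴ) ⊗ₖ
      (fourierMat d₁ * single j j 1 * (fourierMat d₁)ᴴ) := by
    rw [hW, hU, hV, Finset.sum_mul]
    simp only [Finset.mul_sum, ← mul_kronecker_mul, Matrix.mul_one, Matrix.one_mul]
  rw [ptrace23_supermap_controlled E (fun i j => U' i * V' j)
    (conjTranspose_mul_single_one_mul_conjTranspose _)
    (conjTranspose_mul_single_one_mul_conjTranspose _)
    (mul_single_one_mul_conjTranspose_orthogonal (fourierMat_conjTranspose_mul_self d₀))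
    (mul_single_one_mul_conjTranspose_orthogonal (fourierMat_conjTranspose_mul_self d₁))
    ρ _ _ hW_controlled]
  simp only [trace_mul_single, fourierMat_mul_single_mul_conjTranspose_apply_zero,
    MulOpposite.op_one, one_smul, one_div_mul_one_div, Finset.smul_sum]
  simp only [conjTranspose_mul, Matrix.mul_assoc]

theorem stmt2 (d₀ d₁ : ℕ) (hd₀ : 1 ≤ d₀) (hd₁ : 1 ≤ d₁)
    (U' : Fin d₀ → Matrix (Fin 2) (Fin 2) ℂ)
    (V' : Fin d₁ → Matrix (Fin 2) (Fin 2) ℂ)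
    (hU' : ∀ i, U' i ∈ Matrix.unitaryGroup (Fin 2) ℂ)
    (hV' : ∀ j, V' j ∈ Matrix.unitaryGroup (Fin 2) ℂ)
    (U V W : Matrix ((Fin 2 × Fin d₀) × Fin d₁) ((Fin 2 × Fin d₀) × Fin d₁) ℂ)
    (hU : U = ∑ i : Fin d₀,
      (U' i) ⊗ₖ (fourierMat d₀ * Matrix.single i i 1 * (fourierMat d₀)ᴴ) ⊗ₖ
        (1 : Matrix (Fin d₁) (Fin d₁) ℂ))
    (hV : V = ∑ j : Fin d₁,
      (V' j) ⊗ₖ (1 : Matrix (Fin d₀) (Fin d₀) ℂ) ⊗ₖ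
        (fourierMat d₁ * Matrix.single j j 1 * (fourierMat d₁)ᴴ))
    (hW : W = U * V)
    (E : Matrix (Fin 2) (Fin 2) ℂ →ₗ[ℂ] Matrix (Fin 2) (Fin 2) ℂ)
    (ρ : Matrix (Fin 2) (Fin 2) ℂ) :
    ptrace23 d₀ d₁
      (Wᴴ * tensorMap3 d₀ d₁ E
        (W * (ρ ⊗ₖ Matrix.single (⟨0, hd₀⟩ : Fin d₀) (⟨0, hd₀⟩ : Fin d₀) 1 ⊗ₖ
                Matrix.single (⟨0, hd₁⟩ : Fin d₁) (⟨0, hd₁⟩ : Fin d₁) 1) * Wᴴ) * W)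
      = (1 / ((d₀ : ℂ) * (d₁ : ℂ))) •
          ∑ i : Fin d₀, ∑ j : Fin d₁,
            (V' j)ᴴ * (U' i)ᴴ * E (U' i * V' j * ρ * (V' j)ᴴ * (U' i)ᴴ) *
              (U' i * V' j) :=
  stmt2_general d₀ d₁ hd₀ hd₁ U' V' U V W hU hV hW E ρ
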